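/- arXiv:2006.14316 — 2 statements merged into one kernel-verified Lean document; each statement's English description precedes it below -/
import Mathlib

section
/- Proposition 2 (uniform Hadamard differentiability of the inverse/quantile map): Let M > 0 and let H_n, H : [0,M] → ℝ be nondecreasing functions, all belonging to 𝔻. Suppose H is differentiable on a neighborhood of m̃ := Ψ(H) ∈ (0,M), with derivative h that is continuous at m̃ and satisfies h(m̃) > 0. Assume (i) there is K > 0 with √n · sup_{x ∈ [0,M]} |H_n(x) − H(x)| ≤ K for all n ∈ ℕ, and (ii) for every a > 0, √n · sup_{|x| ≤ a n^{-1/2}} |H_n(m̃ + x) − H_n(m̃) − H(m̃ + x) + H(m̃)| → 0 as n → ∞. Then for every sequence of functions α_n : [0,M] → ℝ converging uniformly on [0,M] to a bounded function α that is continuous at m̃, and such that H_n + α_n/√n ∈ 𝔻 for all n, one has √n ( Ψ(H_n + α_n/√n) − Ψ(H_n) ) → −α(m̃)/h(m̃) as n → ∞. -/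
open Filter Topology Set

noncomputable section

/-- The inverse (quantile) map `Ψ(H₀) = inf {t ∈ [0,M] : H₀(t) ≥ 1/2}`,
with the convention `inf ∅ = M` (realized by adjoining `M` to the set, which does not
change the infimum when the set is nonempty since it is contained in `[0,M]`). -/
def PsiMap (M : ℝ) (H : ℝ → ℝ) : ℝ :=
  sInf ({t : ℝ | t ∈ Set.Icc 0 M ∧ 1 / 2 ≤ H t} ∪ {M})

/-- Membership in `𝔻`: nondecreasing, right-continuous functions `H₀ : [0,M] → ℝ`
with `H₀(0) < 1/2` and `H₀(M) > 1/2`. -/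
def MemD (M : ℝ) (H : ℝ → ℝ) : Prop :=
  MonotoneOn H (Set.Icc 0 M) ∧
    (∀ t ∈ Set.Ico 0 M, ContinuousWithinAt H (Set.Ici t) t) ∧
    H 0 < 1 / 2 ∧ 1 / 2 < H M

/-!
Near `m̃` the function `H` is strictly differentiable with slope `d = h(m̃) > 0`, and (ii)
transfers this to `H_n` on windows of width `O(n^{-1/2})` around `m̃`: there
`√n (H_n z - H_n w) = d √n (z - w) + o(1)` uniformly, while `α_n = α(m̃) + o(1)`.
By (i) and `H(m̃) = 1/2`, the quantile `p_n = Ψ(H_n)` lies in such a window. Writing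
`c = -α(m̃)/d` and fixing `ε > 0`, at `p_n + (c + ε)/√n` the perturbed function
`H_n + α_n/√n` is `≥ 1/2` because `H_n(p_n) ≥ 1/2`, and at `p_n + (c - ε)/√n` it is `< 1/2`
because `H_n < 1/2` just left of `p_n`. Hence its quantile lies between these two points.
-/

open Metric

lemma bddBelow_psiSet {M : ℝ} (hM : 0 ≤ M) (G : ℝ → ℝ) :
    BddBelow ({t : ℝ | t ∈ Icc 0 M ∧ 1 / 2 ≤ G t} ∪ {M}) :=
  ⟨0, by rintro s (⟨⟨h0, -⟩, -⟩ | rfl) <;> assumption⟩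

lemma psiMap_nonneg {M : ℝ} (hM : 0 ≤ M) (G : ℝ → ℝ) : 0 ≤ PsiMap M G :=
  le_csInf ⟨M, Or.inr rfl⟩ (by rintro s (⟨⟨h0, -⟩, -⟩ | rfl) <;> assumption)

lemma psiMap_le_right {M : ℝ} (hM : 0 ≤ M) (G : ℝ → ℝ) : PsiMap M G ≤ M :=
  csInf_le (bddBelow_psiSet hM G) (Or.inr rfl)

lemma psiMap_le_of_half_le {M t : ℝ} {G : ℝ → ℝ} (ht : t ∈ Icc 0 M) (hGt : 1 / 2 ≤ G t) :
    PsiMap M G ≤ t :=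
  csInf_le (bddBelow_psiSet (ht.1.trans ht.2) G) (Or.inl ⟨ht, hGt⟩)

lemma lt_half_of_lt_psiMap {M t : ℝ} {G : ℝ → ℝ} (ht : t ∈ Icc 0 M) (htp : t < PsiMap M G) :
    G t < 1 / 2 :=
  lt_of_not_ge fun hGt => (psiMap_le_of_half_le ht hGt).not_gt htp

lemma le_psiMap_of_monotoneOn {M w : ℝ} {G : ℝ → ℝ} (hG : MonotoneOn G (Icc 0 M))
    (hw : w ∈ Icc 0 M) (hGw : G w < 1 / 2) : w ≤ PsiMap M G := by
  refine le_csInf ⟨M, Or.inr rfl⟩ ?_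
  rintro t (⟨ht, hGt⟩ | rfl)
  · exact le_of_not_gt fun htw => (hG ht hw htw.le).trans_lt hGw |>.not_ge hGt
  · exact hw.2

lemma half_le_apply_psiMap {M : ℝ} (hM : 0 ≤ M) {G : ℝ → ℝ} (hG : MemD M G) :
    1 / 2 ≤ G (PsiMap M G) := by
  obtain ⟨-, hrc, -, hGM⟩ := hG
  rcases (psiMap_le_right hM G).eq_or_lt with hpM | hpM
  · rw [hpM]; exact hGM.le
  -- `G ≥ 1/2` on the set whose infimum is `Ψ G`, so right-continuity carries it to `Ψ G`.
  refine ContinuousWithinAt.closure_le (csInf_mem_closure ⟨M, Or.inr rfl⟩ (bddBelow_psiSet hM G))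
    continuousWithinAt_const
    ((hrc _ ⟨psiMap_nonneg hM G, hpM⟩).mono fun t ht => csInf_le (bddBelow_psiSet hM G) ht) ?_
  rintro t (⟨-, hGt⟩ | rfl)
  exacts [hGt, hGM.le]

lemma apply_psiMap_eq_half {M : ℝ} (hM : 0 ≤ M) {H : ℝ → ℝ} (hH : MemD M H)
    (hpos : 0 < PsiMap M H) (hcont : ContinuousAt H (PsiMap M H)) :
    H (PsiMap M H) = 1 / 2 := by
  have hleft := hcont.mono_left (nhdsWithin_le_nhds (s := Iio (PsiMap M H)))
  refine le_antisymm (le_of_tendsto hleft ?_) (half_le_apply_psiMap hM hH)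
  filter_upwards [Ioo_mem_nhdsLT hpos] with t ht
  exact (lt_half_of_lt_psiMap ⟨ht.1.le, ht.2.le.trans (psiMap_le_right hM H)⟩ ht.2).le

lemma abs_psiMap_sub_le {M m q η : ℝ} {G H : ℝ → ℝ} (hG : MonotoneOn G (Icc 0 M))
    (hclose : ∀ x ∈ Icc 0 M, |G x - H x| ≤ η) (hlo : m - q ∈ Icc 0 M) (hhi : m + q ∈ Icc 0 M)
    (hHlo : H (m - q) < 1 / 2 - η) (hHhi : 1 / 2 + η ≤ H (m + q)) :
    |PsiMap M G - m| ≤ q := by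
  have hup := psiMap_le_of_half_le (G := G) hhi (by linarith [(abs_le.mp (hclose _ hhi)).1])
  have hdown := le_psiMap_of_monotoneOn hG hlo (by linarith [(abs_le.mp (hclose _ hlo)).2])
  exact abs_sub_le_iff.mpr ⟨by linarith, by linarith⟩

section Perturbation

variable {M s d κ β₀ R : ℝ} {F β : ℝ → ℝ} {W : Set ℝ}

lemma psiMap_add_div_le (hs : 0 < s) (hM : 0 ≤ M) (hF : MemD M F)
    (hW : closedBall (PsiMap M F) (R / s) ⊆ W) (hWM : W ⊆ Icc 0 M)
    (hlin : ∀ z ∈ W, ∀ w ∈ W, |s * (F z - F w - d * (z - w))| ≤ κ)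
    (hβ : ∀ z ∈ W, |β z - β₀| ≤ κ) {x : ℝ} (hx : |x| ≤ R) (hxκ : 2 * κ ≤ d * x + β₀) :
    PsiMap M (fun z => F z + β z / s) ≤ PsiMap M F + x / s := by
  set p := PsiMap M F
  set t := p + x / s
  have hp : p ∈ W := hW (mem_closedBall_self (by positivity [(abs_nonneg x).trans hx]))
  have ht : t ∈ W := hW (by
    rw [mem_closedBall, dist_self_add_left, Real.norm_eq_abs, abs_div, abs_of_pos hs]
    gcongr)
  have hFt := (abs_le.mp (hlin t ht p hp)).1
  have hβt := (abs_le.mp (hβ t ht)).1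
  have hFp : 0 ≤ s * (F p - 1 / 2) := mul_nonneg hs.le (by linarith [half_le_apply_psiMap hM hF])
  have key : s * (F t + β t / s - 1 / 2) =
      s * (F t - F p - d * (t - p)) + d * x + s * (F p - 1 / 2) + β t := by
    simp only [t]; field_simp; ring
  refine psiMap_le_of_half_le (hWM ht) ?_
  have : 0 ≤ s * (F t + β t / s - 1 / 2) := by rw [key]; linarith
  linarith [(mul_nonneg_iff_of_pos_left hs).mp this]

lemma le_psiMap_add_div (hs : 0 < s) (hG : MonotoneOn (fun z => F z + β z / s) (Icc 0 M))
    (hW : closedBall (PsiMap M F) (R / s) ⊆ W) (hWM : W ⊆ Icc 0 M)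
    (hlin : ∀ z ∈ W, ∀ w ∈ W, |s * (F z - F w - d * (z - w))| ≤ κ)
    (hβ : ∀ z ∈ W, |β z - β₀| ≤ κ) {x η : ℝ} (hx : |x| ≤ R) (hη : 0 < η) (hηR : η ≤ R)
    (hxκ : d * (x + η) + 2 * κ + β₀ ≤ 0) :
    PsiMap M F + x / s ≤ PsiMap M (fun z => F z + β z / s) := by
  set p := PsiMap M F
  have hmem : ∀ y, |y| ≤ R → p + y / s ∈ W := fun y hy => hW (by
    rw [mem_closedBall, dist_self_add_left, Real.norm_eq_abs, abs_div, abs_of_pos hs]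
    gcongr)
  set t := p + x / s
  -- `F (Ψ F) ≥ 1/2` gives no upper bound on `F`, so compare with a point `v` just left of `Ψ F`.
  set v := p + -η / s
  have ht : t ∈ W := hmem x hx
  have hv : v ∈ W := hmem (-η) (by rwa [abs_neg, abs_of_pos hη])
  have hFv : F v < 1 / 2 :=
    lt_half_of_lt_psiMap (hWM hv) (add_lt_of_neg_right p (div_neg_of_neg_of_pos (by linarith) hs))
  have hFt := (abs_le.mp (hlin t ht v hv)).2
  have hβt := (abs_le.mp (hβ t ht)).2
  have key : s * (F t + β t / s - 1 / 2) =
      s * (F t - F v - d * (t - v)) + d * (x + η) + s * (F v - 1 / 2) + β t := by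
    simp only [t, v]; field_simp; ring
  refine le_psiMap_of_monotoneOn hG (hWM ht) ?_
  have : s * (F t + β t / s - 1 / 2) < 0 := by
    rw [key]; linarith [mul_neg_of_pos_of_neg hs (sub_neg.mpr hFv)]
  show F t + β t / s < 1 / 2
  linarith [neg_of_mul_neg_right this hs.le]

lemma dist_mul_psiMap_sub_le (hs : 0 < s) (hM : 0 ≤ M) (hd : 0 < d) (hF : MemD M F)
    (hG : MonotoneOn (fun z => F z + β z / s) (Icc 0 M))
    (hW : closedBall (PsiMap M F) (R / s) ⊆ W) (hWM : W ⊆ Icc 0 M)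
    (hlin : ∀ z ∈ W, ∀ w ∈ W, |s * (F z - F w - d * (z - w))| ≤ κ)
    (hβ : ∀ z ∈ W, |β z - β₀| ≤ κ) {ε : ℝ} (hε : 0 < ε) (hR : |β₀ / d| + ε ≤ R)
    (hκ : 4 * κ ≤ d * ε) :
    dist (s * (PsiMap M (fun z => F z + β z / s) - PsiMap M F)) (-β₀ / d) ≤ ε := by
  set c := -β₀ / d
  have hdc : d * c = -β₀ := by simp only [c]; field_simp
  have hcR : |c| + ε ≤ R := by simpa only [c, neg_div, abs_neg] using hR
  have hdε := mul_pos hd hε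
  have hup := psiMap_add_div_le hs hM hF hW hWM hlin hβ (x := c + ε)
    ((abs_add_le _ _).trans (by rwa [abs_of_pos hε])) (by rw [mul_add, hdc]; linarith)
  have hdown := le_psiMap_add_div hs hG hW hWM hlin hβ (x := c - ε) (η := ε / 2)
    ((abs_sub _ _).trans (by rwa [abs_of_pos hε])) (half_pos hε)
    (by linarith [abs_nonneg c]) (by rw [mul_add, mul_sub, hdc]; linarith)
  rw [Real.dist_eq, abs_sub_le_iff]
  constructor
  · nlinarith [mul_div_cancel₀ (c + ε) hs.ne']
  · nlinarith [mul_div_cancel₀ (c - ε) hs.ne']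

end Perturbation

lemma HasStrictDerivAt.exists_ball_abs_sub_sub_le {f : ℝ → ℝ} {d m κ : ℝ}
    (hf : HasStrictDerivAt f d m) (hκ : 0 < κ) :
    ∃ r > 0, ∀ z ∈ ball m r, ∀ w ∈ ball m r, |f z - f w - d * (z - w)| ≤ κ * |z - w| := by
  obtain ⟨r, hr, hball⟩ :=
    Metric.eventually_nhds_iff.mp (hf.hasStrictFDerivAt.isLittleO.def hκ)
  refine ⟨r, hr, fun z hz w hw => ?_⟩
  have := @hball (z, w) (by rw [Prod.dist_eq]; exact max_lt hz hw)
  simpa [mul_comm d] using this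

lemma eventually_closedBall_div_subset {s : ℕ → ℝ} (hs : Tendsto s atTop atTop) {m : ℝ}
    {U : Set ℝ} (hU : U ∈ 𝓝 m) (a : ℝ) : ∀ᶠ n in atTop, closedBall m (a / s n) ⊆ U := by
  obtain ⟨r, hr, hrU⟩ := Metric.mem_nhds_iff.mp hU
  filter_upwards [(tendsto_const_nhds.div_atTop hs).eventually (gt_mem_nhds hr)] with n hn
  exact (closedBall_subset_ball hn).trans hrU

lemma eventually_abs_sub_le_of_tendstoUniformlyOn {F : ℕ → ℝ → ℝ} {f : ℝ → ℝ} {U : Set ℝ}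
    {m : ℝ} {s : ℕ → ℝ} (hF : TendstoUniformlyOn F f atTop U) (hU : U ∈ 𝓝 m)
    (hf : ContinuousAt f m) (hs : Tendsto s atTop atTop) (a : ℝ) {κ : ℝ} (hκ : 0 < κ) :
    ∀ᶠ n in atTop, ∀ z ∈ closedBall m (a / s n), |F n z - f m| ≤ κ := by
  have hV := inter_mem hU (hf.preimage_mem_nhds (ball_mem_nhds (f m) (half_pos hκ)))
  filter_upwards [eventually_closedBall_div_subset hs hV a,
    Metric.tendstoUniformlyOn_iff.mp hF (κ / 2) (half_pos hκ)] with n hsub hunif z hz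
  obtain ⟨hzU, hzf⟩ := hsub hz
  have := hunif z hzU
  rw [mem_preimage, mem_ball] at hzf
  calc |F n z - f m| = dist (F n z) (f m) := (Real.dist_eq _ _).symm
    _ ≤ dist (f z) (F n z) + dist (f z) (f m) := dist_triangle_left _ _ _
    _ ≤ κ := by linarith

lemma eventually_abs_mul_sub_sub_mul_le {Hn : ℕ → ℝ → ℝ} {H : ℝ → ℝ} {d m : ℝ} {s : ℕ → ℝ}
    (hs : Tendsto s atTop atTop) (hH : HasStrictDerivAt H d m)
    (hii : ∀ a > (0 : ℝ), ∀ ε > (0 : ℝ), ∃ N : ℕ, ∀ n ≥ N, ∀ x : ℝ, |x| ≤ a / s n →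
      s n * |Hn n (m + x) - Hn n m - H (m + x) + H m| ≤ ε)
    {a κ : ℝ} (ha : 0 < a) (hκ : 0 < κ) :
    ∀ᶠ n in atTop, ∀ z ∈ closedBall m (a / s n), ∀ w ∈ closedBall m (a / s n),
      |s n * (Hn n z - Hn n w - d * (z - w))| ≤ κ := by
  obtain ⟨r, hr, hHlin⟩ := hH.exists_ball_abs_sub_sub_le (by positivity : 0 < κ / (4 * a))
  obtain ⟨N, hN⟩ := hii a ha (κ / 4) (by positivity)
  filter_upwards [eventually_ge_atTop N,
    eventually_closedBall_div_subset hs (ball_mem_nhds m hr) a, hs.eventually_gt_atTop 0]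
    with n hn hsub hsn z hz w hw
  have hosc : ∀ y ∈ closedBall m (a / s n),
      s n * |Hn n y - Hn n m - H y + H m| ≤ κ / 4 := fun y hy => by
    simpa using hN n hn (y - m) (by rwa [← Real.dist_eq, ← mem_closedBall])
  have hzw : s n * |z - w| ≤ 2 * a := by
    have := (dist_triangle_right z w m).trans (add_le_add hz hw)
    rw [Real.dist_eq] at this
    nlinarith [mul_div_cancel₀ a hsn.ne']
  have hHzw := hHlin z (hsub hz) w (hsub hw)
  calc |s n * (Hn n z - Hn n w - d * (z - w))|
      = s n * |(Hn n z - Hn n m - H z + H m) - (Hn n w - Hn n m - H w + H m)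
          + (H z - H w - d * (z - w))| := by rw [abs_mul, abs_of_pos hsn]; congr 2; ring
    _ ≤ s n * (|Hn n z - Hn n m - H z + H m| + |Hn n w - Hn n m - H w + H m|
          + |H z - H w - d * (z - w)|) := by
      gcongr
      exact (abs_add_le _ _).trans (add_le_add_left (abs_sub _ _) _)
    _ ≤ κ / 4 + κ / 4 + κ / (4 * a) * (2 * a) := by
      rw [mul_add, mul_add]
      refine add_le_add (add_le_add (hosc z hz) (hosc w hw)) ?_
      calc s n * |H z - H w - d * (z - w)| ≤ s n * (κ / (4 * a) * |z - w|) := by gcongr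
        _ = κ / (4 * a) * (s n * |z - w|) := by ring
        _ ≤ κ / (4 * a) * (2 * a) := by gcongr
    _ = κ := by field_simp; ring

lemma eventually_abs_psiMap_sub_le {M m d K : ℝ} {G : ℕ → ℝ → ℝ} {H : ℝ → ℝ} {s : ℕ → ℝ}
    (hs : Tendsto s atTop atTop) (hG : ∀ n, MonotoneOn (G n) (Icc 0 M))
    (hclose : ∀ n, ∀ x ∈ Icc 0 M, s n * |G n x - H x| ≤ K) (hK : 0 < K)
    (hm : m ∈ Ioo 0 M) (hHm : H m = 1 / 2) (hH : HasStrictDerivAt H d m) (hd : 0 < d) :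
    ∀ᶠ n in atTop, |PsiMap M (G n) - m| ≤ 4 * K / d / s n := by
  obtain ⟨r, hr, hHlin⟩ := hH.exists_ball_abs_sub_sub_le (half_pos hd)
  filter_upwards [eventually_closedBall_div_subset hs
    (inter_mem (ball_mem_nhds m hr) (Icc_mem_nhds hm.1 hm.2)) (4 * K / d),
    hs.eventually_gt_atTop 0] with n hsub hsn
  set q := 4 * K / d / s n
  have hq : 0 ≤ q := by positivity
  have hdq : d * q = 4 * (K / s n) := by simp only [q]; field_simp
  have hlo := hsub (by rw [mem_closedBall, Real.dist_eq, sub_sub_cancel_left, abs_neg,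
    abs_of_nonneg hq] : m - q ∈ closedBall m q)
  have hhi := hsub (by rw [mem_closedBall, Real.dist_eq, add_sub_cancel_left,
    abs_of_nonneg hq] : m + q ∈ closedBall m q)
  have hHlo := (abs_le.mp (hHlin _ hlo.1 m (mem_ball_self hr))).2
  have hHhi := (abs_le.mp (hHlin _ hhi.1 m (mem_ball_self hr))).1
  rw [sub_sub_cancel_left, abs_neg, abs_of_nonneg hq] at hHlo
  rw [add_sub_cancel_left, abs_of_nonneg hq] at hHhi
  have hKs : 0 < K / s n := by positivity
  refine abs_psiMap_sub_le (hG n) (H := H) (η := K / s n) (fun x hx => ?_) hlo.2 hhi.2 ?_ ?_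
  · rw [le_div_iff₀ hsn, mul_comm]; exact hclose n x hx
  · linarith
  · linarith

theorem prop2_uniform_hadamard_differentiability_general
    (M : ℝ) (hM : 0 < M)
    (Hn : ℕ → ℝ → ℝ) (H : ℝ → ℝ)
    (hHnD : ∀ n, MemD M (Hn n)) (hHD : MemD M H)
    (mt : ℝ) (hmt : mt = PsiMap M H) (hmtmem : mt ∈ Set.Ioo 0 M)
    -- `H` is differentiable on a neighborhood of `mt` with derivative `h`,
    -- `h` continuous at `mt` and `h(mt) > 0`
    (h : ℝ → ℝ) (hdiff : ∀ᶠ x in 𝓝 mt, HasDerivAt H (h x) x)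
    (hcont : ContinuousAt h mt) (hpos : 0 < h mt)
    -- (i)
    (K : ℝ) (hK : 0 < K)
    (hi : ∀ n : ℕ, ∀ x ∈ Set.Icc (0 : ℝ) M, Real.sqrt n * |Hn n x - H x| ≤ K)
    -- (ii)
    (hii : ∀ a > (0 : ℝ), ∀ ε > (0 : ℝ), ∃ N : ℕ, ∀ n ≥ N, ∀ x : ℝ,
      |x| ≤ a / Real.sqrt n →
        Real.sqrt n * |Hn n (mt + x) - Hn n mt - H (mt + x) + H mt| ≤ ε)
    -- the perturbations `α_n → α` uniformly on `[0,M]`, `α` bounded and continuous at `mt`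
    (αn : ℕ → ℝ → ℝ) (α : ℝ → ℝ)
    (hαu : TendstoUniformlyOn αn α atTop (Set.Icc 0 M))
    (hαc : ContinuousAt α mt)
    (hmem : ∀ n, MemD M (fun x => Hn n x + αn n x / Real.sqrt n)) :
    Tendsto
      (fun n : ℕ => Real.sqrt n *
        (PsiMap M (fun x => Hn n x + αn n x / Real.sqrt n) - PsiMap M (Hn n)))
      atTop (𝓝 (-α mt / h mt)) := by
  have hs : Tendsto (fun n : ℕ => √(n : ℝ)) atTop atTop :=
    Real.tendsto_sqrt_atTop.comp tendsto_natCast_atTop_atTop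
  have hH : HasStrictDerivAt H (h mt) mt :=
    hasStrictDerivAt_of_hasDerivAt_of_continuousAt hdiff hcont
  have hHmt : H mt = 1 / 2 := by
    subst hmt; exact apply_psiMap_eq_half hM.le hHD hmtmem.1 hH.hasDerivAt.continuousAt
  have hIcc : Icc 0 M ∈ 𝓝 mt := Icc_mem_nhds hmtmem.1 hmtmem.2
  refine Metric.nhds_basis_closedBall.tendsto_right_iff.mpr fun ε hε => ?_
  set R := |α mt / h mt| + ε
  set a := 4 * K / h mt + R
  have hκ : 0 < h mt * ε / 4 := by positivity
  filter_upwards [eventually_abs_psiMap_sub_le hs (fun n => (hHnD n).1) hi hK hmtmem hHmt hH hpos,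
    eventually_closedBall_div_subset hs hIcc a,
    eventually_abs_mul_sub_sub_mul_le hs hH hii (by positivity : 0 < a) hκ,
    eventually_abs_sub_le_of_tendstoUniformlyOn hαu hIcc hαc hs a hκ,
    hs.eventually_gt_atTop 0] with n hΨ hWM hlin hα hsn
  refine dist_mul_psiMap_sub_le hsn hM.le hpos (hHnD n) (hmem n).1
    (closedBall_subset_closedBall' ?_) hWM hlin hα hε le_rfl (by linarith)
  rw [Real.dist_eq, add_div (4 * K / h mt) R]
  linarith

/-- **Proposition 2** (uniform Hadamard differentiability of the inverse/quantile map).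
Let `H_n, H ∈ 𝔻` be nondecreasing on `[0,M]`, `H` differentiable on a neighborhood of
`mt = Ψ(H) ∈ (0,M)` with derivative `h` continuous at `mt` and `h(mt) > 0`. If
(i) `√n sup_{[0,M]} |H_n − H| ≤ K` for all `n` and
(ii) `√n sup_{|x| ≤ a/√n} |H_n(mt+x) − H_n(mt) − H(mt+x) + H(mt)| → 0` for every `a > 0`,
then for every sequence `α_n` converging uniformly on `[0,M]` to a bounded function `α`
continuous at `mt`, with `H_n + α_n/√n ∈ 𝔻`, one has
`√n (Ψ(H_n + α_n/√n) − Ψ(H_n)) → −α(mt)/h(mt)`. -/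
theorem prop2_uniform_hadamard_differentiability
    (M : ℝ) (hM : 0 < M)
    (Hn : ℕ → ℝ → ℝ) (H : ℝ → ℝ)
    (hHnD : ∀ n, MemD M (Hn n)) (hHD : MemD M H)
    (mt : ℝ) (hmt : mt = PsiMap M H) (hmtmem : mt ∈ Set.Ioo 0 M)
    -- `H` is differentiable on a neighborhood of `mt` with derivative `h`,
    -- `h` continuous at `mt` and `h(mt) > 0`
    (h : ℝ → ℝ) (hdiff : ∀ᶠ x in 𝓝 mt, HasDerivAt H (h x) x)
    (hcont : ContinuousAt h mt) (hpos : 0 < h mt)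
    -- (i)
    (K : ℝ) (hK : 0 < K)
    (hi : ∀ n : ℕ, ∀ x ∈ Set.Icc (0 : ℝ) M, Real.sqrt n * |Hn n x - H x| ≤ K)
    -- (ii)
    (hii : ∀ a > (0 : ℝ), ∀ ε > (0 : ℝ), ∃ N : ℕ, ∀ n ≥ N, ∀ x : ℝ,
      |x| ≤ a / Real.sqrt n →
        Real.sqrt n * |Hn n (mt + x) - Hn n mt - H (mt + x) + H mt| ≤ ε)
    -- the perturbations `α_n → α` uniformly on `[0,M]`, `α` bounded and continuous at `mt`
    (αn : ℕ → ℝ → ℝ) (α : ℝ → ℝ)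
    (hαu : TendstoUniformlyOn αn α atTop (Set.Icc 0 M))
    (hαb : ∃ B : ℝ, ∀ x ∈ Set.Icc (0 : ℝ) M, |α x| ≤ B)
    (hαc : ContinuousAt α mt)
    (hmem : ∀ n, MemD M (fun x => Hn n x + αn n x / Real.sqrt n)) :
    Tendsto
      (fun n : ℕ => Real.sqrt n *
        (PsiMap M (fun x => Hn n x + αn n x / Real.sqrt n) - PsiMap M (Hn n)))
      atTop (𝓝 (-α mt / h mt)) :=
  prop2_uniform_hadamard_differentiability_general M hM Hn H hHnD hHD mt hmt hmtmem h hdiff hcont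
    hpos K hK hi hii αn α hαu hαc hmem

end
end

section
/- Positivity of the limiting noncentrality (key step in the proof of Theorem 1(b)): Let B be a real l×k matrix, Σ a real k×k symmetric positive definite matrix, and m ∈ ℝ^k a vector with Bm ≠ 0. Let P be the Moore–Penrose inverse of B Σ Bᵀ. Then the quadratic form (Bm)ᵀ P (Bm) is strictly positive. -/
/-!
Since `Σ` is positive definite, `B` and `E = B Σ Bᵀ` have the same column space; concretely
`E P B = B`, so `Bm = E x` with `x = P B m`. Then `E P E = E` turns the quadratic form into
`(Bm)ᵀ P (Bm) = xᵀ E P E x = xᵀ E x = (Bᵀx)ᵀ Σ (Bᵀx)`, which is positive because `E x ≠ 0`.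
-/

open Matrix ComplexOrder

namespace Matrix

variable {𝕜 : Type*} [RCLike 𝕜] {m n : Type*} [Fintype m] [Fintype n]

theorem PosDef.eq_zero_of_mul_mul_conjTranspose_eq_zero {S : Matrix n n 𝕜} (hS : S.PosDef)
    {A : Matrix m n 𝕜} (h : A * S * Aᴴ = 0) : A = 0 := by
  rw [← conjTranspose_eq_zero, ext_iff_mulVec]
  intro x
  rw [zero_mulVec]
  by_contra hx
  have hpos := hS.dotProduct_mulVec_pos hx
  have hzero : star (Aᴴ *ᵥ x) ⬝ᵥ S *ᵥ (Aᴴ *ᵥ x) = star x ⬝ᵥ (A * S * Aᴴ) *ᵥ x := by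
    simp only [star_mulVec, conjTranspose_conjTranspose, dotProduct_mulVec, vecMul_vecMul,
      Matrix.mul_assoc]
  rw [hzero, h, zero_mulVec, dotProduct_zero] at hpos
  exact hpos.false

theorem PosDef.mul_mul_conjTranspose_mul_mul_eq_self {S : Matrix n n 𝕜} (hS : S.PosDef)
    {B : Matrix m n 𝕜} {P : Matrix m m 𝕜}
    (hP : B * S * Bᴴ * P * (B * S * Bᴴ) = B * S * Bᴴ) :
    B * S * Bᴴ * P * B = B := by
  set E := B * S * Bᴴ
  have hEH : Eᴴ = E := by simp [E, hS.isHermitian.eq, Matrix.mul_assoc]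
  set M := E * P * B - B
  have hMB : M * S * Bᴴ = 0 := by
    simp only [M, Matrix.sub_mul, Matrix.mul_assoc, sub_eq_zero]
    simpa only [E, Matrix.mul_assoc] using hP
  have hMM : M * S * Mᴴ = 0 := by
    simp only [M, conjTranspose_sub, conjTranspose_mul, hEH, Matrix.mul_sub, ← Matrix.mul_assoc,
      hMB, Matrix.zero_mul, sub_zero]
  exact sub_eq_zero.mp (hS.eq_zero_of_mul_mul_conjTranspose_eq_zero hMM)

theorem PosSemidef.dotProduct_mulVec_mulVec_pos {E P : Matrix n n 𝕜} (hE : E.PosSemidef)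
    (hP : E * P * E = E) {x : n → 𝕜} (hx : E *ᵥ x ≠ 0) :
    0 < star (E *ᵥ x) ⬝ᵥ P *ᵥ (E *ᵥ x) := by
  have hquad : star (E *ᵥ x) ⬝ᵥ P *ᵥ (E *ᵥ x) = star x ⬝ᵥ E *ᵥ x := by
    rw [star_mulVec, ← dotProduct_mulVec, hE.isHermitian.eq, mulVec_mulVec, mulVec_mulVec, hP]
  rw [hquad]
  exact (hE.dotProduct_mulVec_nonneg x).lt_of_ne' ((hE.dotProduct_mulVec_zero_iff x).not.mpr hx)

end Matrix

theorem noncentrality_positivity_general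
    (l k : ℕ) (B : Matrix (Fin l) (Fin k) ℝ) (Sig : Matrix (Fin k) (Fin k) ℝ)
    (hSig : Sig.PosDef) (m : Fin k → ℝ) (hm : B.mulVec m ≠ 0)
    (P : Matrix (Fin l) (Fin l) ℝ)
    (h1 : B * Sig * Bᵀ * P * (B * Sig * Bᵀ) = B * Sig * Bᵀ) :
    0 < B.mulVec m ⬝ᵥ P.mulVec (B.mulVec m) := by
  rw [← conjTranspose_eq_transpose_of_trivial] at h1
  have hrange : (B * Sig * Bᴴ) *ᵥ (P *ᵥ (B *ᵥ m)) = B *ᵥ m := by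
    rw [mulVec_mulVec, mulVec_mulVec, hSig.mul_mul_conjTranspose_mul_mul_eq_self h1]
  rw [← hrange] at hm ⊢
  have hE := hSig.posSemidef.mul_mul_conjTranspose_same B
  simpa only [star_trivial] using hE.dotProduct_mulVec_mulVec_pos h1 hm

/-- **Positivity of the limiting noncentrality** (key step in the proof of Theorem 1(b)).
For a real `l × k` matrix `B`, a symmetric positive definite `k × k` matrix `Σ` and a
vector `m` with `Bm ≠ 0`, if `P` is the Moore–Penrose inverse of `B Σ Bᵀ` (i.e. the four
Penrose equations hold), then the quadratic form `(Bm)ᵀ P (Bm)` is strictly positive. -/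
theorem noncentrality_positivity
    (l k : ℕ) (B : Matrix (Fin l) (Fin k) ℝ) (Sig : Matrix (Fin k) (Fin k) ℝ)
    (hSig : Sig.PosDef) (m : Fin k → ℝ) (hm : B.mulVec m ≠ 0)
    (P : Matrix (Fin l) (Fin l) ℝ)
    (h1 : B * Sig * Bᵀ * P * (B * Sig * Bᵀ) = B * Sig * Bᵀ)
    (h2 : P * (B * Sig * Bᵀ) * P = P)
    (h3 : (B * Sig * Bᵀ * P)ᵀ = B * Sig * Bᵀ * P)
    (h4 : (P * (B * Sig * Bᵀ))ᵀ = P * (B * Sig * Bᵀ)) :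
    0 < B.mulVec m ⬝ᵥ P.mulVec (B.mulVec m) :=
  noncentrality_positivity_general l k B Sig hSig m hm P h1
end
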